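/- Let a : ℕ → ℝ be a positive sequence, let q, r > 0 be real numbers and k, h ≥ 0 integers. If a^q is an arithmetic progression of strict order k and a^r is an arithmetic progression of strict order h, then r·k = h·q (as real numbers, with k and h cast to ℝ). -/

import Mathlib

/-!
If `b` is positive and an arithmetic progression of strict order `m`, Newton's forward difference
formula writes `b n` as the value at `n` of a real polynomial of degree exactly `m`, whose leading
coefficient is then positive; hence `b n / n ^ m → L > 0`. Applied to `a ^ q` and `a ^ r` and raised
to the powers `r` and `q`, this gives `a n ^ (q * r) / n ^ (k * r)` and `a n ^ (q * r) / n ^ (h * q)`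
both tending to positive limits, which forces `k * r = h * q`.
-/

/-- `a` is an arithmetic progression of order `h` (real sequences). -/
def IsAPOfOrder (a : ℕ → ℝ) (h : ℕ) : Prop :=
  ∀ n : ℕ, ∑ k ∈ Finset.range (h + 2), (-1 : ℝ) ^ (h + 1 - k) * ((h + 1).choose k) * a (n + k) = 0

/-- `a` is an arithmetic progression of strict order `h`. -/
def IsAPOfStrictOrder (a : ℕ → ℝ) (h : ℕ) : Prop :=
  IsAPOfOrder a h ∧ (h = 0 ∨ ¬ IsAPOfOrder a (h - 1))

open Finset Filter Polynomial Topology Real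
open scoped fwdDiff

section ForwardDifferences

variable {G : Type*} [AddCommGroup G]

lemma fwdDiff_iter_eq_zero_of_le {f : ℕ → G} {m n : ℕ} (hf : (Δ_[1])^[m] f = 0) (hmn : m ≤ n) :
    (Δ_[1])^[n] f = 0 := by
  obtain ⟨j, rfl⟩ := Nat.exists_eq_add_of_le hmn
  rw [add_comm, Function.iterate_add_apply, hf]
  exact Function.iterate_fixed (fwdDiff_const 1 (0 : G)) j

lemma eq_const_of_fwdDiff_eq_zero {f : ℕ → G} (hf : Δ_[1] f = 0) (n : ℕ) : f n = f 0 := by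
  induction n with
  | zero => rfl
  | succ n ih => rw [← ih, ← sub_eq_zero, ← fwdDiff, hf, Pi.zero_apply]

lemma eq_sum_choose_smul_fwdDiff_iter {f : ℕ → G} {m : ℕ} (hf : (Δ_[1])^[m + 1] f = 0) (n : ℕ) :
    f n = ∑ i ∈ range (m + 1), n.choose i • (Δ_[1])^[i] f 0 := by
  have hchoose (i : ℕ) (hi : i ∉ range (n + 1)) : n.choose i • (Δ_[1])^[i] f 0 = 0 := by
    rw [Nat.choose_eq_zero_of_lt (by simpa using hi), zero_smul]
  have hdiff (i : ℕ) (hi : i ∉ range (m + 1)) : n.choose i • (Δ_[1])^[i] f 0 = 0 := by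
    rw [fwdDiff_iter_eq_zero_of_le hf (by simpa using hi), Pi.zero_apply, smul_zero]
  calc f n = ∑ i ∈ range (n + 1), n.choose i • (Δ_[1])^[i] f 0 := by
        simpa using shift_eq_sum_fwdDiff_iter 1 f n 0
    _ = ∑ i ∈ range (n + m + 2), n.choose i • (Δ_[1])^[i] f 0 :=
        sum_subset (range_subset_range.2 (by omega)) fun i _ ↦ hchoose i
    _ = ∑ i ∈ range (m + 1), n.choose i • (Δ_[1])^[i] f 0 :=
        (sum_subset (range_subset_range.2 (by omega)) fun i _ ↦ hdiff i).symm

end ForwardDifferences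

lemma isAPOfOrder_iff_fwdDiff_iter_eq_zero {b : ℕ → ℝ} {m : ℕ} :
    IsAPOfOrder b m ↔ (Δ_[1])^[m + 1] b = 0 := by
  rw [IsAPOfOrder, funext_iff]
  refine forall_congr' fun n ↦ ?_
  rw [fwdDiff_iter_eq_sum_shift, Pi.zero_apply]
  refine Eq.congr_left (sum_congr rfl fun i _ ↦ ?_)
  push_cast [zsmul_eq_mul, smul_eq_mul]
  ring_nf

lemma IsAPOfStrictOrder.fwdDiff_iter_apply_zero_ne_zero {b : ℕ → ℝ} {m : ℕ} (hb : IsAPOfStrictOrder b m)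
    (hb0 : b 0 ≠ 0) : (Δ_[1])^[m] b 0 ≠ 0 := by
  obtain ⟨hord, rfl | hstrict⟩ := hb
  · exact hb0
  obtain ⟨j, rfl⟩ : ∃ j, m = j + 1 := by
    cases m
    · exact absurd hord hstrict
    · exact ⟨_, rfl⟩
  rw [isAPOfOrder_iff_fwdDiff_iter_eq_zero, Function.iterate_succ_apply'] at hord
  rw [Nat.add_sub_cancel, isAPOfOrder_iff_fwdDiff_iter_eq_zero] at hstrict
  exact fun h0 ↦ hstrict (funext fun n ↦ (eq_const_of_fwdDiff_eq_zero hord n).trans h0)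

lemma exists_polynomial_degree_eq_of_fwdDiff_iter {K : Type*} [Field K] [CharZero K]
    {b : ℕ → K} {m : ℕ} (hb : (Δ_[1])^[m + 1] b = 0) (hm : (Δ_[1])^[m] b 0 ≠ 0) :
    ∃ P : K[X], P.degree = m ∧ ∀ n : ℕ, b n = P.eval (n : K) := by
  set c : ℕ → K := fun i ↦ (Δ_[1])^[i] b 0 / i.factorial
  have hdeg (i : ℕ) : (descPochhammer K i).degree = i := by
    rw [degree_eq_natDegree (monic_descPochhammer K i).ne_zero, descPochhammer_natDegree]
  refine ⟨∑ i ∈ range (m + 1), C (c i) * descPochhammer K i, ?_, fun n ↦ ?_⟩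
  · have hcm : c m ≠ 0 := div_ne_zero hm (Nat.cast_ne_zero.2 m.factorial_ne_zero)
    rw [sum_range_succ, degree_add_eq_right_of_degree_lt] <;> rw [degree_C_mul hcm, hdeg]
    refine (degree_sum_le _ _).trans_lt ((Finset.sup_lt_iff (WithBot.bot_lt_coe m)).2 ?_)
    intro i hi
    rw [← smul_eq_C_mul]
    exact (degree_smul_le _ _).trans_lt (by rw [hdeg]; exact WithBot.coe_lt_coe.2 (mem_range.1 hi))
  · rw [eq_sum_choose_smul_fwdDiff_iter hb n, eval_finsetSum]
    refine sum_congr rfl fun i _ ↦ ?_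
    rw [eval_mul, eval_C, descPochhammer_eval_eq_descFactorial,
      Nat.descFactorial_eq_factorial_mul_choose, nsmul_eq_mul]
    have hfact : (i.factorial : K) ≠ 0 := Nat.cast_ne_zero.2 i.factorial_ne_zero
    simp only [c]
    push_cast
    field_simp

lemma IsAPOfStrictOrder.exists_tendsto_div_rpow {b : ℕ → ℝ} {m : ℕ} (hb : IsAPOfStrictOrder b m)
    (hpos : ∀ n, 0 < b n) :
    ∃ L, 0 < L ∧ Tendsto (fun n : ℕ ↦ b n / (n : ℝ) ^ (m : ℝ)) atTop (𝓝 L) := by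
  obtain ⟨P, hdeg, heval⟩ := exists_polynomial_degree_eq_of_fwdDiff_iter
    (isAPOfOrder_iff_fwdDiff_iter_eq_zero.1 hb.1) (hb.fwdDiff_iter_apply_zero_ne_zero (hpos 0).ne')
  have hlim : Tendsto (fun n : ℕ ↦ b n / (n : ℝ) ^ (m : ℝ)) atTop (𝓝 P.leadingCoeff) := by
    have := (P.div_tendsto_atTop_leadingCoeff_div_of_degree_eq (X ^ m)
      (by rw [hdeg, degree_X_pow])).comp tendsto_natCast_atTop_atTop
    simpa [heval, leadingCoeff_X_pow, Function.comp_def] using this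
  refine ⟨P.leadingCoeff, lt_of_le_of_ne ?_ ?_, hlim⟩
  · exact ge_of_tendsto' hlim fun n ↦ div_nonneg (hpos n).le (by positivity)
  · exact (leadingCoeff_ne_zero.2 (ne_zero_of_degree_gt (n := ⊥) (by simp [hdeg]))).symm

lemma tendsto_rpow_div_rpow_mul {f : ℕ → ℝ} {c L : ℝ} (hf : ∀ n, 0 ≤ f n)
    (h : Tendsto (fun n : ℕ ↦ f n / (n : ℝ) ^ c) atTop (𝓝 L)) (hL : L ≠ 0) (p : ℝ) :
    Tendsto (fun n : ℕ ↦ f n ^ p / (n : ℝ) ^ (c * p)) atTop (𝓝 (L ^ p)) :=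
  (h.rpow_const (Or.inl hL)).congr fun n ↦ by
    rw [div_rpow (hf n) (by positivity), rpow_mul n.cast_nonneg]

lemma tendsto_div_rpow_zero_of_lt {f : ℕ → ℝ} {c d L : ℝ} (hcd : c < d)
    (h : Tendsto (fun n : ℕ ↦ f n / (n : ℝ) ^ c) atTop (𝓝 L)) :
    Tendsto (fun n : ℕ ↦ f n / (n : ℝ) ^ d) atTop (𝓝 0) := by
  have hdecay : Tendsto (fun n : ℕ ↦ (n : ℝ) ^ (-(d - c))) atTop (𝓝 0) :=
    (tendsto_rpow_neg_atTop (sub_pos.2 hcd)).comp tendsto_natCast_atTop_atTop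
  refine (mul_zero L ▸ h.mul hdecay).congr' ?_
  filter_upwards [eventually_gt_atTop 0] with n hn
  have hn' : (0 : ℝ) < n := Nat.cast_pos.2 hn
  rw [div_mul_eq_mul_div, div_eq_div_iff (rpow_pos_of_pos hn' c).ne' (rpow_pos_of_pos hn' d).ne',
    mul_assoc, ← rpow_add hn', neg_sub, sub_add_cancel]

lemma eq_of_tendsto_div_rpow {f : ℕ → ℝ} {c d L M : ℝ}
    (hc : Tendsto (fun n : ℕ ↦ f n / (n : ℝ) ^ c) atTop (𝓝 L))
    (hd : Tendsto (fun n : ℕ ↦ f n / (n : ℝ) ^ d) atTop (𝓝 M)) (hL : L ≠ 0) (hM : M ≠ 0) :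
    c = d := by
  rcases lt_trichotomy c d with hcd | hcd | hcd
  · exact absurd (tendsto_nhds_unique hd (tendsto_div_rpow_zero_of_lt hcd hc)) hM
  · exact hcd
  · exact absurd (tendsto_nhds_unique hc (tendsto_div_rpow_zero_of_lt hcd hd)) hL

theorem stmt_14_general (a : ℕ → ℝ) (hpos : ∀ n, 0 < a n) (q r : ℝ)
    (k h : ℕ)
    (haq : IsAPOfStrictOrder (fun n => a n ^ q) k)
    (har : IsAPOfStrictOrder (fun n => a n ^ r) h) :
    r * (k : ℝ) = (h : ℝ) * q := by
  obtain ⟨L, hL, hLq⟩ := haq.exists_tendsto_div_rpow fun n ↦ rpow_pos_of_pos (hpos n) q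
  obtain ⟨M, hM, hMr⟩ := har.exists_tendsto_div_rpow fun n ↦ rpow_pos_of_pos (hpos n) r
  have hLqr := tendsto_rpow_div_rpow_mul (fun n ↦ (rpow_pos_of_pos (hpos n) q).le) hLq hL.ne' r
  have hMrq := tendsto_rpow_div_rpow_mul (fun n ↦ (rpow_pos_of_pos (hpos n) r).le) hMr hM.ne' q
  simp only [← rpow_mul (hpos _).le, mul_comm r q] at hLqr hMrq
  have := eq_of_tendsto_div_rpow hLqr hMrq (rpow_pos_of_pos hL r).ne' (rpow_pos_of_pos hM q).ne'
  linarith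

theorem stmt_14 (a : ℕ → ℝ) (hpos : ∀ n, 0 < a n) (q r : ℝ) (hq : 0 < q) (hr : 0 < r)
    (k h : ℕ)
    (haq : IsAPOfStrictOrder (fun n => a n ^ q) k)
    (har : IsAPOfStrictOrder (fun n => a n ^ r) h) :
    r * (k : ℝ) = (h : ℝ) * q :=
  stmt_14_general a hpos q r k h haq har
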